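/- arXiv:2507.17344 — 2 statements merged into one kernel-verified Lean document; each statement's English description precedes it below -/
import Mathlib

section
/- (Newton–Maclaurin inequality, ratio form) Let 1 ≤ l < k ≤ n and let λ ∈ ℝ^n lie in the Gårding cone Γ_k^+ = {λ : σ_i(λ) > 0 for 1 ≤ i ≤ k}. Then H_{k-1}(λ) H_l(λ) ≥ H_k(λ) H_{l-1}(λ), where H_j = σ_j / C(n,j) is the normalized jth elementary symmetric function. Equality holds if and only if λ = c(1,…,1) for some c > 0. -/
/-- The `k`-th elementary symmetric polynomial of `x ∈ ℝⁿ`. -/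
noncomputable def sigmaE (n k : ℕ) (x : Fin n → ℝ) : ℝ :=
  ∑ s ∈ Finset.powersetCard k (Finset.univ : Finset (Fin n)), ∏ i ∈ s, x i

/-- The normalized `k`-th elementary symmetric polynomial `H_k = σ_k / C(n,k)`. -/
noncomputable def Hnorm (n k : ℕ) (x : Fin n → ℝ) : ℝ := sigmaE n k x / (n.choose k)

/-- The Gårding cone `Γ_k⁺ = {x : σ_i(x) > 0 for all 1 ≤ i ≤ k}`. -/
def GardingCone (n k : ℕ) : Set (Fin n → ℝ) :=
  {x | ∀ i, 1 ≤ i → i ≤ k → 0 < sigmaE n i x}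

/-!
Newton's inequalities `H_j H_{j+2} ≤ H_{j+1}²` are proved by induction on the number `n` of
variables. The roots of the derivative of `∏ (X - λᵢ)` are real by Rolle's theorem, and these
`n - 1` numbers have the same `H_0, …, H_{n-1}` as `λ`; so it suffices to treat `n = j + 2`.
There, replacing each `λᵢ` by `λᵢ⁻¹` turns `H_i` into `H_{n-i} / H_n` and the inequality
into `H_2 ≤ H_1²`, which is the nonnegativity of the variance of `λ`. Equality propagates through
both reductions and forces `λ` to be constant. In `Γ_k⁺` the `H_i` with `i ≤ k` are positive,
so Newton's inequalities say that `i ↦ H_{i+1} / H_i` is antitone on `i < k`.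
-/

open Polynomial

theorem Polynomial.card_roots_derivative_eq_natDegree {p : ℝ[X]}
    (hp : Multiset.card p.roots = p.natDegree) :
    Multiset.card (derivative p).roots = (derivative p).natDegree :=
  le_antisymm (card_roots' _) <| by
    have := card_roots_le_derivative p
    have := natDegree_derivative_le p
    omega

namespace Multiset

section CommSemiring

variable {R : Type*} [CommSemiring R]

theorem esymm_zero (s : Multiset R) : s.esymm 0 = 1 := by
  simp [esymm]

theorem esymm_one (s : Multiset R) : s.esymm 1 = s.sum := by
  simp [esymm, powersetCard_one, map_map]

theorem esymm_cons_succ (a : R) (s : Multiset R) (k : ℕ) :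
    (a ::ₘ s).esymm (k + 1) = s.esymm (k + 1) + a * s.esymm k := by
  simp [esymm, powersetCard_cons, sum_map_mul_left]

theorem esymm_eq_zero_of_card_lt {s : Multiset R} {k : ℕ} (h : card s < k) : s.esymm k = 0 := by
  simp [esymm, powersetCard_eq_empty _ h]

theorem esymm_card (s : Multiset R) : s.esymm (card s) = s.prod := by
  induction s using Multiset.induction_on with
  | empty => simp [esymm_zero]
  | cons a s ih =>
    rw [card_cons, esymm_cons_succ, esymm_eq_zero_of_card_lt (Nat.lt_succ_self _), ih, prod_cons,
      zero_add]

theorem esymm_replicate (n k : ℕ) (c : R) : (replicate n c).esymm k = n.choose k * c ^ k := by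
  induction n generalizing k with
  | zero => cases k <;> simp [esymm, powersetCard_zero_right]
  | succ n ih =>
    cases k with
    | zero => simp [esymm_zero]
    | succ k =>
      rw [replicate_succ, esymm_cons_succ, ih, ih, Nat.choose_succ_succ']
      push_cast
      ring

end CommSemiring

theorem two_mul_esymm_two {R : Type*} [CommRing R] (s : Multiset R) :
    2 * s.esymm 2 = s.sum ^ 2 - (s.map (· ^ 2)).sum := by
  induction s using Multiset.induction_on with
  | empty => simp [esymm, powersetCard_zero_right]
  | cons a s ih =>
    rw [esymm_cons_succ, esymm_one, sum_cons, map_cons, sum_cons]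
    linear_combination ih

theorem sum_map_sub_sq {R : Type*} [CommRing R] (s : Multiset R) (m : R) :
    (s.map fun r => (r - m) ^ 2).sum = (s.map (· ^ 2)).sum - 2 * m * s.sum + card s * m ^ 2 := by
  induction s using Multiset.induction_on with
  | empty => simp
  | cons a s ih =>
    simp only [map_cons, sum_cons, card_cons, ih]
    push_cast
    ring

theorem prod_mul_esymm_map_inv {K : Type*} [Field K] {s : Multiset K} (hs : s.prod ≠ 0)
    {j k : ℕ} (hjk : j + k = card s) : s.prod * (s.map (·⁻¹)).esymm k = s.esymm j := by
  induction s using Multiset.induction_on generalizing j k with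
  | empty =>
    obtain ⟨rfl, rfl⟩ : j = 0 ∧ k = 0 := by simpa using hjk
    simp [esymm_zero]
  | cons a s ih =>
    rw [prod_cons, mul_ne_zero_iff] at hs
    obtain ⟨ha, hs⟩ := hs
    rw [card_cons] at hjk
    rcases k with _ | k
    · rw [esymm_zero, mul_one, ← esymm_card, card_cons, ← hjk, add_zero]
    rw [map_cons, esymm_cons_succ, prod_cons]
    rcases j with _ | j
    · have ih₀ := ih hs (j := 0) (k := k) (by omega)
      simp only [esymm_eq_zero_of_card_lt (by simp; omega : card (s.map (·⁻¹)) < k + 1),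
        esymm_zero] at ih₀ ⊢
      linear_combination ih₀ + s.prod * (s.map (·⁻¹)).esymm k * mul_inv_cancel₀ ha
    · rw [esymm_cons_succ]
      linear_combination a * ih hs (j := j) (k := k + 1) (by omega) +
        ih hs (j := j + 1) (k := k) (by omega) +
        s.prod * (s.map (·⁻¹)).esymm k * mul_inv_cancel₀ ha

noncomputable def normalizedEsymm (s : Multiset ℝ) (k : ℕ) : ℝ :=
  s.esymm k / (card s).choose k

section normalizedEsymm

variable {s : Multiset ℝ}

theorem normalizedEsymm_zero (s : Multiset ℝ) : s.normalizedEsymm 0 = 1 := by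
  simp [normalizedEsymm, esymm_zero]

theorem normalizedEsymm_one (s : Multiset ℝ) : s.normalizedEsymm 1 = s.sum / card s := by
  simp [normalizedEsymm, esymm_one]

theorem normalizedEsymm_card (s : Multiset ℝ) : s.normalizedEsymm (card s) = s.prod := by
  simp [normalizedEsymm, esymm_card]

theorem normalizedEsymm_eq_zero_of_card_lt {k : ℕ} (h : card s < k) :
    s.normalizedEsymm k = 0 := by
  simp [normalizedEsymm, esymm_eq_zero_of_card_lt h]

theorem normalizedEsymm_replicate {n k : ℕ} (c : ℝ) (hk : k ≤ n) :
    (replicate n c).normalizedEsymm k = c ^ k := by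
  have : (n.choose k : ℝ) ≠ 0 := by exact_mod_cast (Nat.choose_pos hk).ne'
  rw [normalizedEsymm, esymm_replicate, card_replicate, mul_div_cancel_left₀ _ this]

theorem sq_normalizedEsymm_one_sub_normalizedEsymm_two (hs : 2 ≤ card s) :
    s.normalizedEsymm 1 ^ 2 - s.normalizedEsymm 2 =
      (s.map fun r => (r - s.normalizedEsymm 1) ^ 2).sum / (card s * (card s - 1)) := by
  have hn : (2 : ℝ) ≤ card s := by exact_mod_cast hs
  have hn₀ : (card s : ℝ) ≠ 0 := by positivity
  have hn₁ : (card s : ℝ) - 1 ≠ 0 := by linarith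
  have hchoose : ((card s).choose 2 : ℝ) = card s * (card s - 1) / 2 := by
    rw [Nat.cast_choose_two]
  have he₂ : s.esymm 2 = (s.sum ^ 2 - (s.map (· ^ 2)).sum) / 2 := by
    linear_combination two_mul_esymm_two s / 2
  rw [sum_map_sub_sq, normalizedEsymm_one, normalizedEsymm, hchoose, he₂]
  field_simp
  ring

theorem normalizedEsymm_two_le_sq (hs : 2 ≤ card s) :
    s.normalizedEsymm 2 ≤ s.normalizedEsymm 1 ^ 2 := by
  have hn : (2 : ℝ) ≤ card s := by exact_mod_cast hs
  have hvar : 0 ≤ (s.map fun r => (r - s.normalizedEsymm 1) ^ 2).sum :=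
    sum_nonneg fun x hx => by
      obtain ⟨r, -, rfl⟩ := mem_map.1 hx
      positivity
  have := sq_normalizedEsymm_one_sub_normalizedEsymm_two hs
  have : 0 ≤ s.normalizedEsymm 1 ^ 2 - s.normalizedEsymm 2 := by
    rw [this]
    exact div_nonneg hvar (by nlinarith)
  linarith

theorem eq_replicate_of_normalizedEsymm_two_eq_sq (hs : 2 ≤ card s)
    (h : s.normalizedEsymm 2 = s.normalizedEsymm 1 ^ 2) :
    s = replicate (card s) (s.normalizedEsymm 1) := by
  have hn : (2 : ℝ) ≤ card s := by exact_mod_cast hs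
  have hsum : (s.map fun r => (r - s.normalizedEsymm 1) ^ 2).sum = 0 := by
    have := sq_normalizedEsymm_one_sub_normalizedEsymm_two hs
    rw [h, sub_self, eq_comm, div_eq_zero_iff] at this
    exact this.resolve_right (by nlinarith)
  have hnonneg : ∀ x ∈ s.map fun r => (r - s.normalizedEsymm 1) ^ 2, 0 ≤ x := by
    intro x hx
    obtain ⟨r, -, rfl⟩ := mem_map.1 hx
    positivity
  refine eq_replicate.2 ⟨rfl, fun r hr => ?_⟩
  have := single_le_sum hnonneg _ (mem_map_of_mem _ hr)
  rw [hsum] at this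
  nlinarith [sq_nonneg (r - s.normalizedEsymm 1)]

theorem normalizedEsymm_map_inv (hs : s.prod ≠ 0) {j k : ℕ} (hjk : j + k = card s) :
    (s.map (·⁻¹)).normalizedEsymm k = s.normalizedEsymm j / s.normalizedEsymm (card s) := by
  rw [normalizedEsymm_card, normalizedEsymm, normalizedEsymm, card_map,
    ← prod_mul_esymm_map_inv hs hjk, Nat.choose_symm_of_eq_add hjk.symm]
  field_simp

end normalizedEsymm

theorem exists_card_eq_esymm_mul_eq_of_card_eq_succ {s : Multiset ℝ} {n : ℕ}
    (hs : card s = n + 1) :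
    ∃ t : Multiset ℝ, card t = n ∧
      ∀ j ≤ n, (n + 1 : ℝ) * t.esymm j = (n + 1 - j) * s.esymm j := by
  set p : ℝ[X] := (s.map fun a => X - C a).prod
  have hp : p.natDegree = n + 1 := by rw [natDegree_multiset_prod_X_sub_C_eq_card, hs]
  have hp_coeff : ∀ j ≤ n + 1, p.coeff (n + 1 - j) = (-1) ^ j * s.esymm j := fun j hj => by
    rw [prod_X_sub_C_coeff s (by omega), hs, Nat.sub_sub_self hj]
  have hq_roots : card (derivative p).roots = (derivative p).natDegree :=
    card_roots_derivative_eq_natDegree (by rw [roots_multiset_prod_X_sub_C, hs, hp])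
  set q := derivative p
  have hq_top : q.coeff n = n + 1 := by
    rw [coeff_derivative, ← hp,
      (monic_multiset_prod_of_monic _ _ fun a _ => monic_X_sub_C a).coeff_natDegree, one_mul]
  have hq : q.natDegree = n := by
    have : q.natDegree ≤ p.natDegree - 1 := natDegree_derivative_le p
    have := le_natDegree_of_ne_zero (p := q) (n := n) (by rw [hq_top]; positivity)
    omega
  refine ⟨q.roots, hq_roots.trans hq, fun j hj => ?_⟩
  have hq_coeff := coeff_eq_esymm_roots_of_card hq_roots (k := n - j) (by omega)
  rw [leadingCoeff, hq, hq_top, Nat.sub_sub_self hj, coeff_derivative, ← Nat.sub_add_comm hj,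
    hp_coeff j (by omega), Nat.cast_sub hj] at hq_coeff
  have hsign : ((-1 : ℝ) ^ j) ^ 2 = 1 := by rw [← pow_mul, mul_comm, pow_mul]; simp
  linear_combination (-(-1) ^ j) * hq_coeff +
    ((n + 1 - j) * s.esymm j - (n + 1) * q.roots.esymm j) * hsign

theorem exists_card_eq_normalizedEsymm_eq_of_card_eq_succ {s : Multiset ℝ} {n : ℕ}
    (hs : card s = n + 1) :
    ∃ t : Multiset ℝ, card t = n ∧
      ∀ j ≤ n, t.normalizedEsymm j = s.normalizedEsymm j := by
  obtain ⟨t, ht, hst⟩ := exists_card_eq_esymm_mul_eq_of_card_eq_succ hs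
  refine ⟨t, ht, fun j hj => ?_⟩
  have hchoose : ((n.choose j * (n + 1) : ℕ) : ℝ) = ((n + 1).choose j * (n + 1 - j) : ℕ) :=
    congrArg _ (Nat.choose_mul_succ_eq n j)
  push_cast [Nat.cast_sub (by omega : j ≤ n + 1)] at hchoose
  have : (n.choose j : ℝ) ≠ 0 := by exact_mod_cast (Nat.choose_pos hj).ne'
  have : ((n + 1).choose j : ℝ) ≠ 0 := by exact_mod_cast (Nat.choose_pos (by omega)).ne'
  rw [normalizedEsymm, normalizedEsymm, ht, hs, div_eq_div_iff (by assumption) (by assumption)]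
  apply mul_left_cancel₀ (by positivity : (n + 1 : ℝ) ≠ 0)
  linear_combination ((n + 1).choose j : ℝ) * hst j hj - s.esymm j * hchoose

theorem normalizedEsymm_mul_le_sq_of_card_eq {s : Multiset ℝ} {j : ℕ} (hs : card s = j + 2)
    (hprod : s.prod ≠ 0) :
    s.normalizedEsymm j * s.normalizedEsymm (j + 2) ≤ s.normalizedEsymm (j + 1) ^ 2 ∧
      (s.normalizedEsymm j * s.normalizedEsymm (j + 2) = s.normalizedEsymm (j + 1) ^ 2 →
        ∃ c, s = replicate (card s) c) := by
  set t := s.map (·⁻¹)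
  have ht : 2 ≤ card t := by simp [t, hs]
  have hP : s.normalizedEsymm (card s) ≠ 0 := by rwa [normalizedEsymm_card]
  have h₁ : s.normalizedEsymm (j + 1) ^ 2 =
      s.normalizedEsymm (card s) ^ 2 * t.normalizedEsymm 1 ^ 2 := by
    rw [normalizedEsymm_map_inv hprod (by omega : j + 1 + 1 = card s)]
    field_simp
  have h₂ : s.normalizedEsymm j * s.normalizedEsymm (j + 2) =
      s.normalizedEsymm (card s) ^ 2 * t.normalizedEsymm 2 := by
    rw [normalizedEsymm_map_inv hprod (by omega : j + 2 = card s), hs]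
    field_simp
  rw [h₁, h₂]
  refine ⟨mul_le_mul_of_nonneg_left (normalizedEsymm_two_le_sq ht) (sq_nonneg _), fun h => ?_⟩
  obtain ⟨c, hc⟩ : ∃ c, t = replicate (card t) c :=
    ⟨_, eq_replicate_of_normalizedEsymm_two_eq_sq ht (mul_left_cancel₀ (pow_ne_zero 2 hP) h)⟩
  refine ⟨c⁻¹, ?_⟩
  calc s = t.map (·⁻¹) := by simp [t]
    _ = replicate (card s) c⁻¹ := by rw [hc, map_replicate, card_map]

theorem normalizedEsymm_mul_le_sq {s : Multiset ℝ} {j : ℕ}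
    (hs : s.normalizedEsymm (j + 2) ≠ 0) :
    s.normalizedEsymm j * s.normalizedEsymm (j + 2) ≤ s.normalizedEsymm (j + 1) ^ 2 ∧
      (s.normalizedEsymm j * s.normalizedEsymm (j + 2) = s.normalizedEsymm (j + 1) ^ 2 →
        ∃ c, s = replicate (card s) c) := by
  obtain ⟨m, hm⟩ : ∃ m, card s = m := ⟨_, rfl⟩
  have hjm : j + 2 ≤ m := by
    by_contra h
    exact hs (normalizedEsymm_eq_zero_of_card_lt (by omega))
  induction m, hjm using Nat.le_induction generalizing s with
  | base => exact normalizedEsymm_mul_le_sq_of_card_eq hm (by rwa [← normalizedEsymm_card, hm])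
  | succ m hjm ih =>
    obtain ⟨t, ht, hts⟩ := exists_card_eq_normalizedEsymm_eq_of_card_eq_succ hm
    obtain ⟨hle, heq⟩ := ih (s := t) (by rwa [hts _ hjm]) ht
    rw [hts j (by omega), hts (j + 1) (by omega), hts (j + 2) hjm] at hle heq
    refine ⟨hle, fun h => ?_⟩
    -- `H₁` and `H₂` of `s` are those of the constant `t`, so equality holds in `H₂ ≤ H₁²`
    obtain ⟨c, hc⟩ := heq h
    have h₁ : s.normalizedEsymm 1 = c := by
      rw [← hts 1 (by omega), hc, normalizedEsymm_replicate c (by omega), pow_one]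
    have h₂ : s.normalizedEsymm 2 = c ^ 2 := by
      rw [← hts 2 (by omega), hc, normalizedEsymm_replicate c (by omega)]
    exact ⟨_, eq_replicate_of_normalizedEsymm_two_eq_sq (by omega) (by rw [h₁, h₂])⟩

section ratio

variable {s : Multiset ℝ} {k : ℕ}

theorem normalizedEsymm_ratio_succ_le {i : ℕ} (hpos : ∀ j ≤ i + 2, 0 < s.normalizedEsymm j) :
    s.normalizedEsymm (i + 2) / s.normalizedEsymm (i + 1) ≤
      s.normalizedEsymm (i + 1) / s.normalizedEsymm i := by
  rw [div_le_div_iff₀ (hpos _ (by omega)) (hpos _ (by omega)), ← sq, mul_comm]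
  exact (normalizedEsymm_mul_le_sq (hpos _ le_rfl).ne').1

theorem antitoneOn_normalizedEsymm_ratio (hpos : ∀ i ≤ k, 0 < s.normalizedEsymm i) :
    AntitoneOn (fun i => s.normalizedEsymm (i + 1) / s.normalizedEsymm i) (Set.Iio k) := by
  refine antitoneOn_of_succ_le Set.ordConnected_Iio fun i _ _ hi => ?_
  rw [Order.succ_eq_add_one, Set.mem_Iio] at hi
  exact normalizedEsymm_ratio_succ_le fun j hj => hpos j (by omega)

theorem normalizedEsymm_succ_mul_le_mul (hpos : ∀ i ≤ k + 1, 0 < s.normalizedEsymm i) {l : ℕ}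
    (hlk : l ≤ k) :
    s.normalizedEsymm (k + 1) * s.normalizedEsymm l ≤
      s.normalizedEsymm k * s.normalizedEsymm (l + 1) := by
  have := antitoneOn_normalizedEsymm_ratio hpos (Set.mem_Iio.2 (by omega)) (by simp) hlk
  rwa [div_le_div_iff₀ (hpos _ (by omega)) (hpos _ (by omega)), mul_comm _ (s.normalizedEsymm k)]
    at this

theorem eq_replicate_of_normalizedEsymm_mul_eq_mul (hpos : ∀ i ≤ k + 1, 0 < s.normalizedEsymm i)
    {l : ℕ} (hlk : l < k)
    (h : s.normalizedEsymm k * s.normalizedEsymm (l + 1) =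
      s.normalizedEsymm (k + 1) * s.normalizedEsymm l) :
    ∃ c, s = replicate (card s) c := by
  set f := fun i => s.normalizedEsymm (i + 1) / s.normalizedEsymm i
  have hf := antitoneOn_normalizedEsymm_ratio hpos
  have hkl : f k = f l := by
    simp only [f]
    rw [div_eq_div_iff (hpos _ (by omega)).ne' (hpos _ (by omega)).ne']
    linear_combination -h
  have hstep : f (l + 1) = f l :=
    le_antisymm (hf (Set.mem_Iio.2 (by omega)) (Set.mem_Iio.2 (by omega)) (by omega))
      (hkl ▸ hf (Set.mem_Iio.2 (by omega)) (Set.mem_Iio.2 (by omega)) (by omega))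
  simp only [f] at hstep
  rw [div_eq_div_iff (hpos _ (by omega)).ne' (hpos _ (by omega)).ne', ← sq] at hstep
  exact (normalizedEsymm_mul_le_sq (j := l) (hpos _ (by omega)).ne').2
    (by linear_combination hstep)

end ratio

end Multiset

open Multiset

theorem sigmaE_eq_esymm (n k : ℕ) (x : Fin n → ℝ) :
    sigmaE n k x = (Finset.univ.val.map x).esymm k :=
  (Finset.esymm_map_val x _ k).symm

theorem Hnorm_eq_normalizedEsymm (n k : ℕ) (x : Fin n → ℝ) :
    Hnorm n k x = (Finset.univ.val.map x).normalizedEsymm k := by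
  simp [Hnorm, normalizedEsymm, sigmaE_eq_esymm]

theorem map_univ_eq_replicate_iff {n : ℕ} {x : Fin n → ℝ} {c : ℝ} :
    Finset.univ.val.map x = replicate n c ↔ ∀ i, x i = c := by
  simp [eq_replicate]

theorem normalizedEsymm_pos_of_mem_gardingCone {n k : ℕ} {x : Fin n → ℝ}
    (hx : x ∈ GardingCone n k) (hkn : k ≤ n) {i : ℕ} (hi : i ≤ k) :
    0 < (Finset.univ.val.map x).normalizedEsymm i := by
  rcases i with _ | i
  · simp [normalizedEsymm_zero]
  · rw [← Hnorm_eq_normalizedEsymm]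
    exact div_pos (hx _ (by omega) hi) (by exact_mod_cast Nat.choose_pos (by omega))

/-- Newton–Maclaurin inequality (ratio form): for `1 ≤ l < k ≤ n` and `λ ∈ Γ_k⁺`,
`H_{k-1}(λ) H_l(λ) ≥ H_k(λ) H_{l-1}(λ)`, with equality iff `λ = c(1,…,1)` for some
`c > 0`. -/
theorem stmt3 (n k l : ℕ) (hl : 1 ≤ l) (hlk : l < k) (hkn : k ≤ n)
    (x : Fin n → ℝ) (hx : x ∈ GardingCone n k) :
    Hnorm n (k-1) x * Hnorm n l x ≥ Hnorm n k x * Hnorm n (l-1) x ∧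
    (Hnorm n (k-1) x * Hnorm n l x = Hnorm n k x * Hnorm n (l-1) x ↔
      ∃ c : ℝ, 0 < c ∧ ∀ i, x i = c) := by
  obtain ⟨l, rfl⟩ : ∃ l', l = l' + 1 := ⟨l - 1, by omega⟩
  obtain ⟨k, rfl⟩ : ∃ k', k = k' + 1 := ⟨k - 1, by omega⟩
  set s := Finset.univ.val.map x
  have hpos : ∀ i ≤ k + 1, 0 < s.normalizedEsymm i :=
    fun i hi => normalizedEsymm_pos_of_mem_gardingCone hx hkn hi
  simp only [Nat.add_sub_cancel, Hnorm_eq_normalizedEsymm, ge_iff_le]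
  refine ⟨normalizedEsymm_succ_mul_le_mul hpos (by omega), fun h => ?_, ?_⟩
  · obtain ⟨c, hc⟩ := eq_replicate_of_normalizedEsymm_mul_eq_mul hpos (by omega) h
    rw [show card s = n by simp [s]] at hc
    have hc₁ : s.normalizedEsymm 1 = c := by
      rw [hc, normalizedEsymm_replicate c (by omega), pow_one]
    exact ⟨c, hc₁ ▸ hpos 1 (by omega), map_univ_eq_replicate_iff.1 hc⟩
  · rintro ⟨c, -, hxc⟩
    have hs : s = replicate n c := map_univ_eq_replicate_iff.2 hxc
    have hrep : ∀ i ≤ n, s.normalizedEsymm i = c ^ i := fun i hi => by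
      rw [hs, normalizedEsymm_replicate c hi]
    rw [hrep k (by omega), hrep (l + 1) (by omega), hrep (k + 1) hkn, hrep l (by omega)]
    ring
end

section
/- Let λ ∈ Γ_k^+ ⊂ ℝ^n, 1 ≤ l ≤ k ≤ n−1, and let a_0,…,a_{l-1} ≥ 0 and b_l,…,b_k ≥ 0 be reals with ∑_{i=0}^{l-1} a_i H_i(λ) = ∑_{j=l}^{k} b_j H_j(λ) > 0. Then ∑_{j=l}^{k} b_j H_{j+1}(λ) ≤ ∑_{i=0}^{l-1} a_i H_{i+1}(λ), with equality only if λ = c(1,…,1). -/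
/-!
Newton's inequalities `H_i H_{i+2} ≤ H_{i+1}²` and the positivity of `H_0, …, H_k` on `Γ_k⁺`
make `j ↦ H_{j+1} / H_j` antitone on `0, …, k`, so `H_i H_{j+1} ≤ H_{i+1} H_j` for `i < l ≤ j ≤ k`.
Multiplying by `a_i b_j ≥ 0` and summing, the two sides become `(∑ a_i H_i)(∑ b_j H_{j+1})` and
`(∑ a_i H_{i+1})(∑ b_j H_j)`, and the common positive value of `∑ a_i H_i = ∑ b_j H_j` cancels.
Equality forces equality in some cross inequality with `a_i b_j ≠ 0`, hence in a Newton inequality.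

Newton's inequalities for a multiset `s` of reals go by induction on its size: the roots of the
derivative of `∏_{r ∈ s} (X - r)` are real by Rolle's theorem and have the same `H_j` for
`j < card s`. In the remaining case `n = card s = i + 2`, with `P_r = ∏_{r' ≠ r} r'` one has
`σ_{n-1} = ∑ P_r`, `σ_n = r P_r` and `2 σ_n σ_{n-2} = ∑_{r ≠ r'} P_r P_{r'}`, which turns the
inequality into `n ∑ P_r² ≥ (∑ P_r)²`.
-/

open Polynomial Finset

theorem Finset.sum_powersetCard_card_sub_one {ι M : Type*} [DecidableEq ι] [AddCommMonoid M]
    (t : Finset ι) (ht : t.Nonempty) (f : Finset ι → M) :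
    ∑ u ∈ t.powersetCard (#t - 1), f u = ∑ i ∈ t, f (t.erase i) := by
  symm
  refine sum_bij (fun i _ => t.erase i) (fun i hi => ?_) (fun i hi j hj h => ?_) (fun u hu => ?_)
    (fun _ _ => rfl)
  · exact mem_powersetCard.mpr ⟨erase_subset _ _, card_erase_of_mem hi⟩
  · by_contra hij
    exact notMem_erase i t (h ▸ mem_erase.mpr ⟨hij, hi⟩)
  · obtain ⟨hut, hcard⟩ := mem_powersetCard.mp hu
    obtain ⟨i, hi⟩ : ∃ i, t \ u = {i} := card_eq_one.mp (by
      rw [card_sdiff_of_subset hut, hcard]; have := ht.card_pos; omega)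
    have hi' : i ∈ t \ u := hi ▸ mem_singleton_self i
    refine ⟨i, (mem_sdiff.mp hi').1, ?_⟩
    rw [← sdiff_singleton_eq_erase, ← hi, sdiff_sdiff_right_self, inf_eq_inter,
      inter_eq_right.mpr hut]

theorem Finset.sum_sum_powersetCard_erase {ι M : Type*} [Fintype ι] [DecidableEq ι]
    [AddCommMonoid M] (k : ℕ) (f : Finset ι → M) :
    ∑ i, ∑ u ∈ (univ.erase i).powersetCard k, f u
      = (Fintype.card ι - k) • ∑ u ∈ powersetCard k (univ : Finset ι), f u := by
  have hfilter (i : ι) :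
      (univ.erase i).powersetCard k = {u ∈ powersetCard k (univ : Finset ι) | i ∉ u} := by
    ext u
    simp [subset_erase, and_comm]
  simp_rw [hfilter, sum_filter]
  rw [sum_comm, smul_sum]
  refine sum_congr rfl fun u hu => ?_
  rw [← sum_filter, sum_const, filter_not, filter_mem_eq_inter, univ_inter,
    card_sdiff_of_subset (subset_univ u), card_univ, (mem_powersetCard_univ.mp hu)]

theorem Finset.sum_sum_sub_sq {ι R : Type*} [CommRing R] (s : Finset ι) (f : ι → R) :
    ∑ i ∈ s, ∑ j ∈ s, (f i - f j) ^ 2 = 2 * (#s * ∑ i ∈ s, f i ^ 2 - (∑ i ∈ s, f i) ^ 2) := by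
  have hexp (i j : ι) : (f i - f j) ^ 2 = f i ^ 2 + f j ^ 2 - 2 * f i * f j := by ring
  simp only [hexp, sum_sub_distrib, sum_add_distrib, sum_const, nsmul_eq_mul]
  simp only [← mul_sum, ← sum_mul]
  ring

section TopTriple

variable {ι R : Type*} [Fintype ι] [DecidableEq ι] [CommRing R]

theorem esymm_card_sub_one_eq_sum_prod_erase [Nonempty ι] (x : ι → R) :
    (univ.val.map x).esymm (Fintype.card ι - 1) = ∑ i, ∏ j ∈ univ.erase i, x j := by
  rw [esymm_map_val, ← card_univ, sum_powersetCard_card_sub_one _ univ_nonempty]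

theorem esymm_card_eq_mul_prod_erase (x : ι → R) (i : ι) :
    (univ.val.map x).esymm (Fintype.card ι) = x i * ∏ j ∈ univ.erase i, x j := by
  rw [esymm_map_val, ← card_univ, powersetCard_self, sum_singleton,
    mul_prod_erase _ _ (mem_univ i)]

theorem two_mul_esymm_card_mul_esymm_card_sub_two (x : ι → R) (h : 2 ≤ Fintype.card ι) :
    2 * ((univ.val.map x).esymm (Fintype.card ι) * (univ.val.map x).esymm (Fintype.card ι - 2))
      = ∑ i, ∑ j ∈ univ.erase i, (∏ l ∈ univ.erase i, x l) * ∏ l ∈ univ.erase j, x l := by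
  have hpair (i : ι) (j) (hj : j ∈ univ.erase i) :
      (∏ l ∈ univ.erase i, x l) * ∏ l ∈ univ.erase j, x l
        = (univ.val.map x).esymm (Fintype.card ι) * ∏ l ∈ (univ.erase i).erase j, x l := by
    rw [← mul_prod_erase _ x hj, esymm_card_eq_mul_prod_erase x j]
    ring
  have hinner (i : ι) : ∑ j ∈ univ.erase i, ∏ l ∈ (univ.erase i).erase j, x l
      = ∑ u ∈ (univ.erase i).powersetCard (Fintype.card ι - 2), ∏ l ∈ u, x l := by
    have hcard : #(univ.erase i) = Fintype.card ι - 1 := by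
      rw [card_erase_of_mem (mem_univ i), card_univ]
    rw [show Fintype.card ι - 2 = #(univ.erase i) - 1 by omega,
      sum_powersetCard_card_sub_one _ (card_pos.mp (by omega))]
  simp_rw [sum_congr rfl (hpair _), ← mul_sum, hinner, sum_sum_powersetCard_erase,
    esymm_map_val, Nat.sub_sub_self h]
  ring

theorem two_mul_esymm_top_discr_eq_sum_sq (x : ι → R) (h : 2 ≤ Fintype.card ι) :
    2 * (((Fintype.card ι : R) - 1) * (univ.val.map x).esymm (Fintype.card ι - 1) ^ 2
        - 2 * Fintype.card ι * ((univ.val.map x).esymm (Fintype.card ι - 2)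
          * (univ.val.map x).esymm (Fintype.card ι)))
      = ∑ i, ∑ j, (∏ l ∈ univ.erase i, x l - ∏ l ∈ univ.erase j, x l) ^ 2 := by
  have : Nonempty ι := Fintype.card_pos_iff.mp (by omega)
  have hpairs : ∑ i, ∑ j ∈ univ.erase i, (∏ l ∈ univ.erase i, x l) * ∏ l ∈ univ.erase j, x l
      = (∑ i, ∏ l ∈ univ.erase i, x l) ^ 2 - ∑ i, (∏ l ∈ univ.erase i, x l) ^ 2 := by
    simp_rw [← mul_sum, sum_erase_eq_sub (mem_univ _), mul_sub, sum_sub_distrib, ← sum_mul, sq]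
  have htwo := two_mul_esymm_card_mul_esymm_card_sub_two x h
  rw [sum_sum_sub_sq, esymm_card_sub_one_eq_sum_prod_erase, card_univ]
  linear_combination -2 * (Fintype.card ι : R) * htwo - 2 * (Fintype.card ι : R) * hpairs

end TopTriple

namespace Multiset

theorem two_mul_card_mul_esymm_le (s : Multiset ℝ) (hs : 2 ≤ card s) :
    2 * card s * (s.esymm (card s - 2) * s.esymm (card s))
      ≤ ((card s : ℝ) - 1) * s.esymm (card s - 1) ^ 2 := by
  classical
  have hid := two_mul_esymm_top_discr_eq_sum_sq (fun r : s => (r : ℝ)) (by rwa [card_coe])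
  rw [map_univ_coe, card_coe] at hid
  have hsq :
      0 ≤ ∑ i : s, ∑ j : s, (∏ l ∈ univ.erase i, (l : ℝ) - ∏ l ∈ univ.erase j, (l : ℝ)) ^ 2 :=
    Finset.sum_nonneg fun _ _ => Finset.sum_nonneg fun _ _ => sq_nonneg _
  linarith

theorem exists_eq_of_two_mul_card_mul_esymm_eq (s : Multiset ℝ) (hs : 2 ≤ card s)
    (hpos : 0 < s.esymm (card s - 1))
    (he : 2 * card s * (s.esymm (card s - 2) * s.esymm (card s))
      = ((card s : ℝ) - 1) * s.esymm (card s - 1) ^ 2) :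
    ∃ c, ∀ r ∈ s, r = c := by
  classical
  have hid := two_mul_esymm_top_discr_eq_sum_sq (fun r : s => (r : ℝ)) (by rwa [card_coe])
  rw [map_univ_coe, card_coe] at hid
  set P : s → ℝ := fun i => ∏ l ∈ univ.erase i, (l : ℝ)
  have hPeq (i j : s) : P i = P j := by
    have hzero : ∑ i, ∑ j, (P i - P j) ^ 2 = 0 := by linarith
    rw [Finset.sum_eq_zero_iff_of_nonneg
      fun _ _ => Finset.sum_nonneg fun _ _ => sq_nonneg _] at hzero
    have := (Finset.sum_eq_zero_iff_of_nonneg fun _ _ => sq_nonneg _).mp (hzero i (mem_univ i)) j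
      (mem_univ j)
    exact sub_eq_zero.mp (pow_eq_zero_iff two_ne_zero |>.mp this)
  obtain ⟨r₀⟩ : Nonempty s := Fintype.card_pos_iff.mp (by rw [card_coe]; omega)
  have : Nonempty s := ⟨r₀⟩
  have hsum : s.esymm (card s - 1) = card s * P r₀ := by
    have := esymm_card_sub_one_eq_sum_prod_erase (fun r : s => (r : ℝ))
    rw [map_univ_coe, card_coe] at this
    rw [this, Finset.sum_congr rfl fun i _ => hPeq i r₀, Finset.sum_const, Finset.card_univ,
      card_coe, nsmul_eq_mul]
  have hP₀ : 0 < P r₀ := pos_of_mul_pos_right (hsum ▸ hpos) (Nat.cast_nonneg _)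
  refine ⟨s.esymm (card s) / P r₀, fun r hr => ?_⟩
  obtain ⟨i, -, rfl⟩ := Multiset.mem_map.mp ((map_univ_coe s).symm ▸ hr)
  have hprod := esymm_card_eq_mul_prod_erase (fun r : s => (r : ℝ)) i
  rw [map_univ_coe, card_coe] at hprod
  change s.esymm (card s) = (i : ℝ) * P i at hprod
  rw [hprod, hPeq i r₀, mul_div_cancel_right₀ _ hP₀.ne']

noncomputable def esymmMean (s : Multiset ℝ) (j : ℕ) : ℝ :=
  s.esymm j / (card s).choose j

noncomputable def derivativeRoots (s : Multiset ℝ) : Multiset ℝ :=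
  (derivative (s.map fun a => X - C a).prod).roots

theorem card_derivativeRoots (s : Multiset ℝ) : card (derivativeRoots s) = card s - 1 := by
  have hle : card (derivativeRoots s) ≤ card s - 1 :=
    (card_roots' _).trans ((natDegree_derivative_le _).trans
      (by rw [natDegree_multiset_prod_X_sub_C_eq_card]))
  have hge := card_roots_le_derivative (s.map fun a => X - C a).prod
  rw [roots_multiset_prod_X_sub_C] at hge
  unfold derivativeRoots at hle ⊢
  omega

theorem natDegree_derivative_prod_X_sub_C (s : Multiset ℝ) :
    (derivative (s.map fun a => X - C a).prod).natDegree = card s - 1 :=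
  le_antisymm ((natDegree_derivative_le _).trans (by rw [natDegree_multiset_prod_X_sub_C_eq_card]))
    (card_derivativeRoots s ▸ card_roots' _)

theorem esymm_derivativeRoots (s : Multiset ℝ) {j : ℕ} (hj : j < card s) :
    card s * (derivativeRoots s).esymm j = (card s - j : ℕ) * s.esymm j := by
  have hdeg := natDegree_derivative_prod_X_sub_C s
  set p := (s.map fun a => X - C a).prod
  have hcoeff (j : ℕ) (hj : j < card s) :
      (derivative p).coeff (card s - 1 - j) = (-1) ^ j * s.esymm j * (card s - j : ℕ) := by
    rw [coeff_derivative, prod_X_sub_C_coeff s (by omega),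
      show card s - (card s - 1 - j + 1) = j by omega]
    norm_cast
    rw [show card s - 1 - j + 1 = card s - j by omega]
  have hlc : (derivative p).leadingCoeff = card s := by
    rw [leadingCoeff, hdeg]
    simpa [esymm] using hcoeff 0 (by omega)
  have hvieta := coeff_eq_esymm_roots_of_card (p := derivative p)
    (by rw [hdeg]; exact card_derivativeRoots s) (k := card s - 1 - j) (by omega)
  rw [hcoeff j hj, hlc, hdeg, show card s - 1 - (card s - 1 - j) = j by omega] at hvieta
  refine mul_left_cancel₀ (pow_ne_zero j (neg_ne_zero.mpr one_ne_zero) : ((-1 : ℝ) ^ j) ≠ 0) ?_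
  unfold derivativeRoots
  linear_combination -hvieta

theorem esymmMean_derivativeRoots (s : Multiset ℝ) {j : ℕ} (hj : j < card s) :
    esymmMean (derivativeRoots s) j = esymmMean s j := by
  have hchoose := Nat.choose_mul_succ_eq (card s - 1) j
  rw [Nat.sub_add_cancel (by omega)] at hchoose
  have hchooseR : ((card s - 1).choose j : ℝ) * card s = (card s).choose j * (card s - j : ℕ) := by
    exact_mod_cast hchoose
  have hc₁ : ((card s - 1).choose j : ℝ) ≠ 0 := by
    exact_mod_cast (Nat.choose_pos (by omega)).ne'
  have hc₂ : ((card s).choose j : ℝ) ≠ 0 := by exact_mod_cast (Nat.choose_pos (by omega)).ne'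
  rw [esymmMean, esymmMean, card_derivativeRoots, div_eq_div_iff hc₁ hc₂]
  refine mul_left_cancel₀ (Nat.cast_ne_zero.mpr (by omega) : (card s : ℝ) ≠ 0) ?_
  linear_combination ((card s).choose j : ℝ) * esymm_derivativeRoots s hj - s.esymm j * hchooseR

/- If `c` is a root, Rolle's theorem leaves no room for a second distinct root. Otherwise every
root is simple (a multiple root is a root of the derivative) and Rolle allows at most two. -/
theorem eq_of_forall_mem_derivativeRoots_eq (s : Multiset ℝ) (hs : 3 ≤ card s) {c : ℝ}
    (hc : ∀ r ∈ derivativeRoots s, r = c) : ∀ r ∈ s, r = c := by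
  classical
  set p := (s.map fun a => X - C a).prod
  have hroots : p.roots = s := roots_multiset_prod_X_sub_C s
  have hp' : derivative p ≠ 0 := ne_zero_of_natDegree_gt (n := 0)
    (by rw [natDegree_derivative_prod_X_sub_C]; omega)
  have hsub : (derivativeRoots s).toFinset ⊆ {c} := fun r hr =>
    Finset.mem_singleton.mpr (hc r (mem_toFinset.mp hr))
  have hrolle := card_roots_toFinset_le_card_roots_derivative_sdiff_roots_succ p
  rw [hroots] at hrolle
  by_cases hcs : c ∈ s
  · have hempty : (derivativeRoots s).toFinset \ s.toFinset = ∅ :=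
      Finset.sdiff_eq_empty_iff_subset.mpr (hsub.trans (by simpa using hcs))
    change _ ≤ #((derivativeRoots s).toFinset \ s.toFinset) + 1 at hrolle
    rw [hempty, Finset.card_empty] at hrolle
    exact fun r hr => Finset.card_le_one.mp hrolle r (mem_toFinset.mpr hr) c (mem_toFinset.mpr hcs)
  · exfalso
    have hnodup : s.Nodup := nodup_iff_count_le_one.mpr fun r => by
      by_contra! hr
      have hmult : 1 < p.rootMultiplicity r := by rwa [← count_roots, hroots]
      have hr' : r ∈ derivativeRoots s :=
        mem_roots'.mpr ⟨hp', ((one_lt_rootMultiplicity_iff_isRoot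
          (monic_multiset_prod_of_monic _ _ fun a _ => monic_X_sub_C a).ne_zero).mp hmult).2⟩
      exact hcs (hc r hr' ▸ count_pos.mp (by omega))
    have hdiff : #((derivativeRoots s).toFinset \ s.toFinset) ≤ 1 :=
      (Finset.card_le_card (Finset.sdiff_subset.trans hsub)).trans (Finset.card_singleton c).le
    have := toFinset_card_of_nodup hnodup
    change _ ≤ #((derivativeRoots s).toFinset \ s.toFinset) + 1 at hrolle
    omega

theorem esymmMean_sq_sub_mul_of_card_eq (s : Multiset ℝ) {i : ℕ} (hs : card s = i + 2) :
    esymmMean s (i + 1) ^ 2 - esymmMean s i * esymmMean s (i + 2)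
      = (((card s : ℝ) - 1) * s.esymm (card s - 1) ^ 2
          - 2 * card s * (s.esymm (card s - 2) * s.esymm (card s)))
        / ((card s : ℝ) ^ 2 * (card s - 1)) := by
  have hchoose : ((i + 2).choose i : ℝ) = (i + 2) * (i + 1) / 2 := by
    rw [Nat.choose_symm_of_eq_add rfl, Nat.cast_choose_two]
    push_cast
    ring
  rw [esymmMean, esymmMean, esymmMean, hs, Nat.add_sub_cancel, show i + 2 - 1 = i + 1 by omega,
    hchoose, Nat.choose_succ_self_right, Nat.choose_self]
  have hi₁ : (i : ℝ) + 1 ≠ 0 := by positivity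
  have hi₂ : (i : ℝ) + 2 ≠ 0 := by positivity
  push_cast
  rw [show (i : ℝ) + 2 - 1 = i + 1 by ring]
  field_simp
  ring

theorem esymmMean_mul_le_sq (s : Multiset ℝ) {i : ℕ} (hi : i + 2 ≤ card s) :
    esymmMean s i * esymmMean s (i + 2) ≤ esymmMean s (i + 1) ^ 2 := by
  obtain ⟨d, hd⟩ := Nat.exists_eq_add_of_le hi
  induction d generalizing s with
  | zero =>
    have hm : (1 : ℝ) ≤ card s := by exact_mod_cast (by omega : 1 ≤ card s)
    have hdisc := esymmMean_sq_sub_mul_of_card_eq s hd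
    have := div_nonneg (sub_nonneg.mpr (two_mul_card_mul_esymm_le s (by omega)))
      (mul_nonneg (sq_nonneg (card s : ℝ)) (sub_nonneg.mpr hm))
    linarith
  | succ d ih =>
    have hcard := card_derivativeRoots s
    have := ih (derivativeRoots s) (by omega) (by omega)
    rwa [esymmMean_derivativeRoots s (by omega), esymmMean_derivativeRoots s (by omega),
      esymmMean_derivativeRoots s (by omega)] at this

theorem exists_eq_of_sq_esymmMean_eq (s : Multiset ℝ) {i : ℕ} (hi : i + 2 ≤ card s)
    (hpos : 0 < esymmMean s (i + 1))
    (he : esymmMean s (i + 1) ^ 2 = esymmMean s i * esymmMean s (i + 2)) :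
    ∃ c, ∀ r ∈ s, r = c := by
  obtain ⟨d, hd⟩ := Nat.exists_eq_add_of_le hi
  induction d generalizing s with
  | zero =>
    have hm : (1 : ℝ) < card s := by exact_mod_cast (by omega : 1 < card s)
    have hdisc := esymmMean_sq_sub_mul_of_card_eq s hd
    rw [sub_eq_zero.mpr he, eq_comm, div_eq_zero_iff] at hdisc
    refine exists_eq_of_two_mul_card_mul_esymm_eq s (by omega) ?_ ?_
    · rw [esymmMean, ← show card s - 1 = i + 1 by omega] at hpos
      exact (div_pos_iff_of_pos_right (Nat.cast_pos.mpr (Nat.choose_pos (by omega)))).mp hpos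
    · rcases hdisc with hdisc | hdisc
      · linarith
      · exfalso
        have : (0 : ℝ) < (card s : ℝ) ^ 2 * (card s - 1) :=
          mul_pos (by positivity) (sub_pos.mpr hm)
        exact this.ne' hdisc
  | succ d ih =>
    have hcard := card_derivativeRoots s
    rw [← esymmMean_derivativeRoots s (j := i) (by omega),
      ← esymmMean_derivativeRoots s (j := i + 1) (by omega),
      ← esymmMean_derivativeRoots s (j := i + 2) (by omega)] at he
    rw [← esymmMean_derivativeRoots s (by omega)] at hpos
    obtain ⟨c, hc⟩ := ih (derivativeRoots s) (by omega) hpos he (by omega)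
    exact ⟨c, eq_of_forall_mem_derivativeRoots_eq s (by omega) hc⟩

end Multiset

section LogConcave

variable {u : ℕ → ℝ} {k : ℕ}

theorem mul_succ_le_succ_mul_of_sq_le (hpos : ∀ j ≤ k, 0 < u j)
    (hlc : ∀ j, j + 1 ≤ k → u j * u (j + 2) ≤ u (j + 1) ^ 2) {i j : ℕ} (hij : i ≤ j)
    (hjk : j ≤ k) : u i * u (j + 1) ≤ u (i + 1) * u j := by
  induction j, hij using Nat.le_induction with
  | base => exact (mul_comm _ _).le
  | succ m him ih =>
    have hcross := ih (by omega)
    have hm := hlc m hjk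
    have hum := hpos m (by omega)
    have hui := hpos i (by omega)
    have hum₁ := hpos (m + 1) hjk
    refine le_of_mul_le_mul_right ?_ hum
    calc u i * u (m + 2) * u m = u i * (u m * u (m + 2)) := by ring
      _ ≤ u i * u (m + 1) ^ 2 := mul_le_mul_of_nonneg_left hm hui.le
      _ = (u i * u (m + 1)) * u (m + 1) := by ring
      _ ≤ (u (i + 1) * u m) * u (m + 1) := mul_le_mul_of_nonneg_right hcross hum₁.le
      _ = u (i + 1) * u (m + 1) * u m := by ring

theorem sq_eq_mul_of_mul_succ_eq_succ_mul (hpos : ∀ j ≤ k, 0 < u j)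
    (hlc : ∀ j, j + 1 ≤ k → u j * u (j + 2) ≤ u (j + 1) ^ 2) {i m : ℕ} (him : i ≤ m)
    (hmk : m + 1 ≤ k) (he : u i * u (m + 2) = u (i + 1) * u (m + 1)) :
    u (m + 1) ^ 2 = u m * u (m + 2) := by
  have hcross := mul_succ_le_succ_mul_of_sq_le hpos hlc him (by omega)
  have hm := hlc m hmk
  have hui := hpos i (by omega)
  have hum₁ := hpos (m + 1) hmk
  refine le_antisymm (le_of_mul_le_mul_left ?_ hui) hm
  calc u i * u (m + 1) ^ 2 = (u i * u (m + 1)) * u (m + 1) := by ring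
    _ ≤ (u (i + 1) * u m) * u (m + 1) := mul_le_mul_of_nonneg_right hcross hum₁.le
    _ = u i * (u m * u (m + 2)) := by rw [mul_right_comm, ← he]; ring

end LogConcave

section WeightedSums

variable {ι κ : Type*} {I : Finset ι} {J : Finset κ} {a f f' : ι → ℝ} {b g g' : κ → ℝ}

theorem sum_mul_sum_sub_sum_mul_sum :
    (∑ i ∈ I, a i * f' i) * (∑ j ∈ J, b j * g j) - (∑ i ∈ I, a i * f i) * (∑ j ∈ J, b j * g' j)
      = ∑ i ∈ I, ∑ j ∈ J, a i * b j * (f' i * g j - f i * g' j) := by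
  simp only [sum_mul_sum, ← sum_sub_distrib]
  exact sum_congr rfl fun _ _ => sum_congr rfl fun _ _ => by ring

theorem sum_mul_sum_le_sum_mul_sum (ha : ∀ i ∈ I, 0 ≤ a i) (hb : ∀ j ∈ J, 0 ≤ b j)
    (h : ∀ i ∈ I, ∀ j ∈ J, f i * g' j ≤ f' i * g j) :
    (∑ i ∈ I, a i * f i) * (∑ j ∈ J, b j * g' j)
      ≤ (∑ i ∈ I, a i * f' i) * (∑ j ∈ J, b j * g j) := by
  rw [← sub_nonneg, sum_mul_sum_sub_sum_mul_sum]
  exact sum_nonneg fun i hi => sum_nonneg fun j hj =>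
    mul_nonneg (mul_nonneg (ha i hi) (hb j hj)) (sub_nonneg.mpr (h i hi j hj))

theorem mul_eq_mul_of_sum_mul_sum_eq (ha : ∀ i ∈ I, 0 ≤ a i) (hb : ∀ j ∈ J, 0 ≤ b j)
    (h : ∀ i ∈ I, ∀ j ∈ J, f i * g' j ≤ f' i * g j)
    (he : (∑ i ∈ I, a i * f i) * (∑ j ∈ J, b j * g' j)
      = (∑ i ∈ I, a i * f' i) * (∑ j ∈ J, b j * g j))
    {i : ι} (hi : i ∈ I) (hai : a i ≠ 0) {j : κ} (hj : j ∈ J) (hbj : b j ≠ 0) :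
    f i * g' j = f' i * g j := by
  have hterm (i) (hi : i ∈ I) (j) (hj : j ∈ J) : 0 ≤ a i * b j * (f' i * g j - f i * g' j) :=
    mul_nonneg (mul_nonneg (ha i hi) (hb j hj)) (sub_nonneg.mpr (h i hi j hj))
  have hzero := sum_mul_sum_sub_sum_mul_sum.symm.trans (sub_eq_zero.mpr he.symm)
  rw [sum_eq_zero_iff_of_nonneg fun i hi => sum_nonneg (hterm i hi)] at hzero
  have := (sum_eq_zero_iff_of_nonneg (hterm i hi)).mp (hzero i hi) j hj
  rcases mul_eq_zero.mp this with hab | hfg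
  · exact absurd hab (mul_ne_zero hai hbj)
  · linarith

end WeightedSums

theorem Hnorm_eq_esymmMean (n j : ℕ) (x : Fin n → ℝ) :
    Hnorm n j x = (univ.val.map x).esymmMean j := by
  rw [Hnorm, Multiset.esymmMean, Multiset.card_map, card_val, card_univ, Fintype.card_fin,
    esymm_map_val]
  rfl

theorem Hnorm_pos_of_mem_gardingCone {n k : ℕ} {x : Fin n → ℝ} (hx : x ∈ GardingCone n k)
    (hkn : k ≤ n) {j : ℕ} (hj : j ≤ k) : 0 < Hnorm n j x := by
  rcases Nat.eq_zero_or_pos j with rfl | hj₀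
  · simp [Hnorm, sigmaE]
  · exact div_pos (hx j hj₀ hj) (Nat.cast_pos.mpr (Nat.choose_pos (hj.trans hkn)))

theorem stmt18_general (n k l : ℕ) (hkn : k ≤ n - 1)
    (x : Fin n → ℝ) (hx : x ∈ GardingCone n k)
    (a b : ℕ → ℝ) (ha : ∀ i, 0 ≤ a i) (hb : ∀ j, 0 ≤ b j)
    (heq : ∑ i ∈ Finset.range l, a i * Hnorm n i x
      = ∑ j ∈ Finset.Icc l k, b j * Hnorm n j x)
    (hpos : 0 < ∑ j ∈ Finset.Icc l k, b j * Hnorm n j x) :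
    ∑ j ∈ Finset.Icc l k, b j * Hnorm n (j+1) x
      ≤ ∑ i ∈ Finset.range l, a i * Hnorm n (i+1) x ∧
    (∑ j ∈ Finset.Icc l k, b j * Hnorm n (j+1) x
        = ∑ i ∈ Finset.range l, a i * Hnorm n (i+1) x →
      ∃ c : ℝ, ∀ p, x p = c) := by
  have hH (j : ℕ) (hj : j ≤ k) : 0 < Hnorm n j x := Hnorm_pos_of_mem_gardingCone hx (by omega) hj
  have hcard : Multiset.card (univ.val.map x) = n := by simp
  have hnewton (j : ℕ) (hj : j + 1 ≤ k) :
      Hnorm n j x * Hnorm n (j + 2) x ≤ Hnorm n (j + 1) x ^ 2 := by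
    simpa only [Hnorm_eq_esymmMean] using (univ.val.map x).esymmMean_mul_le_sq (by omega)
  have hcross : ∀ i ∈ range l, ∀ j ∈ Icc l k,
      Hnorm n i x * Hnorm n (j + 1) x ≤ Hnorm n (i + 1) x * Hnorm n j x := fun i hi j hj => by
    rw [mem_range] at hi
    rw [mem_Icc] at hj
    exact mul_succ_le_succ_mul_of_sq_le (u := (Hnorm n · x)) hH hnewton (by omega) hj.2
  have hle := sum_mul_sum_le_sum_mul_sum (fun i _ => ha i) (fun j _ => hb j) hcross
  rw [heq, mul_comm (∑ i ∈ range l, _)] at hle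
  refine ⟨le_of_mul_le_mul_left hle hpos, fun hsums => ?_⟩
  obtain ⟨i, hi, hai⟩ := exists_ne_zero_of_sum_ne_zero (heq ▸ hpos.ne')
  obtain ⟨j, hj, hbj⟩ := exists_ne_zero_of_sum_ne_zero hpos.ne'
  have he := mul_eq_mul_of_sum_mul_sum_eq (fun i _ => ha i) (fun j _ => hb j) hcross
    (by rw [heq, hsums, mul_comm]) hi (left_ne_zero_of_mul hai) hj (left_ne_zero_of_mul hbj)
  rw [mem_range] at hi
  rw [mem_Icc] at hj
  obtain ⟨m, rfl⟩ : ∃ m, j = m + 1 := ⟨j - 1, by omega⟩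
  have hsq :=
    sq_eq_mul_of_mul_succ_eq_succ_mul (u := (Hnorm n · x)) hH hnewton (by omega) hj.2 he
  simp only [Hnorm_eq_esymmMean] at hsq hH
  obtain ⟨c, hc⟩ := (univ.val.map x).exists_eq_of_sq_esymmMean_eq (by omega) (hH _ hj.2) hsq
  exact ⟨c, fun p => hc (x p) (Multiset.mem_map_of_mem x (mem_univ p))⟩

/-- Weighted sum comparison (raised indices): let `λ ∈ Γ_k⁺`, `1 ≤ l ≤ k ≤ n-1`,
and let `a_0,…,a_{l-1} ≥ 0`, `b_l,…,b_k ≥ 0` with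
`∑_{i=0}^{l-1} a_i H_i(λ) = ∑_{j=l}^{k} b_j H_j(λ) > 0`. Then
`∑_{j=l}^{k} b_j H_{j+1}(λ) ≤ ∑_{i=0}^{l-1} a_i H_{i+1}(λ)`, with equality only if
`λ = c(1,…,1)`. -/
theorem stmt18 (n k l : ℕ) (hl : 1 ≤ l) (hlk : l ≤ k) (hkn : k ≤ n - 1)
    (x : Fin n → ℝ) (hx : x ∈ GardingCone n k)
    (a b : ℕ → ℝ) (ha : ∀ i, 0 ≤ a i) (hb : ∀ j, 0 ≤ b j)
    (heq : ∑ i ∈ Finset.range l, a i * Hnorm n i x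
      = ∑ j ∈ Finset.Icc l k, b j * Hnorm n j x)
    (hpos : 0 < ∑ j ∈ Finset.Icc l k, b j * Hnorm n j x) :
    ∑ j ∈ Finset.Icc l k, b j * Hnorm n (j+1) x
      ≤ ∑ i ∈ Finset.range l, a i * Hnorm n (i+1) x ∧
    (∑ j ∈ Finset.Icc l k, b j * Hnorm n (j+1) x
        = ∑ i ∈ Finset.range l, a i * Hnorm n (i+1) x →
      ∃ c : ℝ, ∀ p, x p = c) :=
  stmt18_general n k l hkn x hx a b ha hb heq hpos
end
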